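/- Let μ₁, μ₂ ∈ ℝ^d, σ > 0 and α > 1. The Rényi divergence of order α between the product Gaussian measures ⊗_{j=1}^d N((μ₁)_j, σ²) and ⊗_{j=1}^d N((μ₂)_j, σ²) on ℝ^d equals α ‖μ₁ − μ₂‖₂² / (2σ²). Consequently, if a function f mapping datasets to ℝ^d has ℓ₂-sensitivity Δ_f = max_{D ∼ D'} ‖f(D) − f(D')‖₂, then the Gaussian mechanism M_σ f(·) = f(·) + v with v ∼ N(0, σ² I_d) is (α, α Δ_f² / (2σ²))-RDP. -/

import Mathlib

/-! The likelihood ratio of `N(m₁, v)` to `N(m₂, v)` is the exponential of an affine function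
of `x`, so completing the square turns `∫ (dN(m₁,v)/dN(m₂,v))^α dN(m₂,v)` into
`exp (α (α - 1) (m₁ - m₂)² / (2v))` times the total mass of `N(α m₁ + (1 - α) m₂, v)`.
For product measures both the likelihood ratio and this moment factor over the coordinates,
which gives `D_α = α ‖m₁ - m₂‖² / (2v)`; the RDP bound is monotonicity in `‖m₁ - m₂‖²`. -/

open MeasureTheory Real

open Classical in
/-- Rényi divergence of order `a` between measures `P` and `Q`:
`(a-1)⁻¹ log ∫ (dP/dQ)^a dQ`, equal to `⊤` when `P` is not absolutely continuous
with respect to `Q` (or the integral is infinite). -/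
noncomputable def renyiDiv {X : Type*} [MeasurableSpace X] (a : ℝ) (P Q : Measure X) : EReal :=
  if P ≪ Q ∧ ∫⁻ x, (P.rnDeriv Q x) ^ a ∂Q ≠ ⊤ then
    (((a - 1)⁻¹ * Real.log ((∫⁻ x, (P.rnDeriv Q x) ^ a ∂Q).toReal) : ℝ) : EReal)
  else ⊤

open scoped ENNReal NNReal
open ProbabilityTheory

theorem lintegral_fin_nat_prod_eq_prod {n : ℕ} {E : Type*} [MeasurableSpace E]
    {μ : Fin n → Measure E} [∀ i, SigmaFinite (μ i)]
    {f : Fin n → E → ℝ≥0∞} (hf : ∀ i, Measurable (f i)) :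
    ∫⁻ x, ∏ i, f i (x i) ∂Measure.pi μ = ∏ i, ∫⁻ x, f i x ∂μ i := by
  induction n with
  | zero => simp
  | succ n ih =>
    calc
      _ = ∫⁻ x : E × (Fin n → E),
            f 0 x.1 * ∏ i : Fin n, f i.succ (x.2 i) ∂(μ 0).prod (Measure.pi fun i ↦ μ i.succ) := by
        rw [← ((measurePreserving_piFinSuccAbove μ 0).symm).lintegral_comp_emb
          (MeasurableEquiv.measurableEmbedding _)]
        simp_rw [MeasurableEquiv.piFinSuccAbove_symm_apply, Fin.insertNthEquiv,
          Fin.prod_univ_succ, Fin.insertNth_zero, Equiv.coe_fn_mk, Fin.cons_succ,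
          Fin.zero_succAbove, cast_eq, Fin.cons_zero]
      _ = (∫⁻ x, f 0 x ∂μ 0) * ∏ i : Fin n, ∫⁻ x, f i.succ x ∂μ i.succ := by
        have h_tail : Measurable fun y : Fin n → E ↦ ∏ i, f i.succ (y i) :=
          Finset.measurable_prod _ fun i _ ↦ (hf i.succ).comp (measurable_pi_apply i)
        rw [lintegral_prod_mul (hf 0).aemeasurable h_tail.aemeasurable, ih fun i ↦ hf i.succ]
      _ = ∏ i, ∫⁻ x, f i x ∂μ i := (Fin.prod_univ_succ fun i ↦ ∫⁻ x, f i x ∂μ i).symm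

theorem lintegral_fintype_prod_eq_prod {ι : Type*} [Fintype ι] {E : Type*} [MeasurableSpace E]
    {μ : ι → Measure E} [∀ i, SigmaFinite (μ i)]
    {f : ι → E → ℝ≥0∞} (hf : ∀ i, Measurable (f i)) :
    ∫⁻ x, ∏ i, f i (x i) ∂Measure.pi μ = ∏ i, ∫⁻ x, f i x ∂μ i := by
  let e := (Fintype.equivFin ι).symm
  rw [← (measurePreserving_piCongrLeft _ e).lintegral_comp_emb
    (MeasurableEquiv.measurableEmbedding _)]
  simp_rw [← e.prod_comp, MeasurableEquiv.coe_piCongrLeft, Equiv.piCongrLeft_apply_apply]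
  exact lintegral_fin_nat_prod_eq_prod fun i ↦ hf (e i)

theorem Measure.pi_eq_withDensity_prod {ι : Type*} [Fintype ι] {E : Type*} [MeasurableSpace E]
    {P ν : ι → Measure E} [∀ i, SigmaFinite (P i)] [∀ i, SigmaFinite (ν i)]
    {g : ι → E → ℝ≥0∞} (hg : ∀ i, Measurable (g i)) (hP : ∀ i, P i = (ν i).withDensity (g i)) :
    Measure.pi P = (Measure.pi ν).withDensity fun x ↦ ∏ i, g i (x i) := by
  refine Measure.pi_eq fun s hs ↦ ?_
  have h_indicator : (Set.univ.pi s).indicator (fun x ↦ ∏ i, g i (x i))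
      = fun x ↦ ∏ i, (s i).indicator (g i) (x i) := by
    ext x
    by_cases hx : x ∈ Set.univ.pi s
    · rw [Set.indicator_of_mem hx]
      exact Finset.prod_congr rfl fun i _ ↦ (Set.indicator_of_mem (hx i (Set.mem_univ i)) _).symm
    · obtain ⟨i, hi⟩ : ∃ i, x i ∉ s i := by simpa only [Set.mem_univ_pi, not_forall] using hx
      rw [Set.indicator_of_notMem hx]
      exact (Finset.prod_eq_zero (Finset.mem_univ i) (Set.indicator_of_notMem hi _)).symm
  rw [withDensity_apply _ (MeasurableSet.univ_pi hs),
    ← lintegral_indicator (MeasurableSet.univ_pi hs), h_indicator,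
    lintegral_fintype_prod_eq_prod fun i ↦ (hg i).indicator (hs i)]
  refine Finset.prod_congr rfl fun i _ ↦ ?_
  rw [lintegral_indicator (hs i), hP i, withDensity_apply _ (hs i)]

theorem withDensity_withDensity_div {X : Type*} [MeasurableSpace X] (μ : Measure X)
    {p q : X → ℝ≥0∞} (hp : Measurable p) (hq : Measurable q) (hq_zero : ∀ x, q x ≠ 0)
    (hq_top : ∀ x, q x ≠ ∞) :
    (μ.withDensity q).withDensity (p / q) = μ.withDensity p := by
  rw [← withDensity_mul _ hq (hp.div hq)]
  congr 1
  ext x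
  exact ENNReal.mul_div_cancel (hq_zero x) (hq_top x)

theorem renyiDiv_withDensity {X : Type*} [MeasurableSpace X] (a : ℝ) {Q : Measure X}
    [SigmaFinite Q] {G : X → ℝ≥0∞} (hG : Measurable G) (h_fin : ∫⁻ x, G x ^ a ∂Q ≠ ∞) :
    renyiDiv a (Q.withDensity G) Q = (((a - 1)⁻¹ * log (∫⁻ x, G x ^ a ∂Q).toReal : ℝ) : EReal) := by
  have h_int : ∫⁻ x, (Q.withDensity G).rnDeriv Q x ^ a ∂Q = ∫⁻ x, G x ^ a ∂Q :=
    lintegral_congr_ae <| (Measure.rnDeriv_withDensity Q hG).mono fun x hx ↦ congrArg (· ^ a) hx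
  rw [renyiDiv, if_pos ⟨withDensity_absolutelyContinuous Q G, h_int ▸ h_fin⟩, h_int]

section Gaussian

variable {v : ℝ≥0}

theorem gaussianReal_eq_withDensity_div (m₁ m₂ : ℝ) (hv : v ≠ 0) :
    gaussianReal m₁ v = (gaussianReal m₂ v).withDensity (gaussianPDF m₁ v / gaussianPDF m₂ v) := by
  rw [gaussianReal_of_var_ne_zero _ hv, gaussianReal_of_var_ne_zero _ hv,
    withDensity_withDensity_div _ (measurable_gaussianPDF _ _) (measurable_gaussianPDF _ _)
      (fun x ↦ (gaussianPDF_pos _ hv x).ne') fun x ↦ ENNReal.ofReal_ne_top]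

theorem gaussianPDFReal_mul_div_rpow (m₁ m₂ a : ℝ) (hv : v ≠ 0) (x : ℝ) :
    gaussianPDFReal m₂ v x * (gaussianPDFReal m₁ v x / gaussianPDFReal m₂ v x) ^ a
      = exp (a * (a - 1) * (m₁ - m₂) ^ 2 / (2 * v))
        * gaussianPDFReal (a * m₁ + (1 - a) * m₂) v x := by
  have hc : (√(2 * π * v))⁻¹ ≠ 0 := by positivity
  have hv' : (v : ℝ) ≠ 0 := by exact_mod_cast hv
  simp only [gaussianPDFReal, mul_div_mul_left _ _ hc, ← exp_sub, ← exp_mul]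
  rw [mul_left_comm, mul_assoc, ← exp_add, ← exp_add]
  congr 2
  field_simp
  ring

theorem lintegral_gaussianPDF_div_rpow (m₁ m₂ a : ℝ) (hv : v ≠ 0) :
    ∫⁻ x, (gaussianPDF m₁ v / gaussianPDF m₂ v) x ^ a ∂gaussianReal m₂ v
      = ENNReal.ofReal (exp (a * (a - 1) * (m₁ - m₂) ^ 2 / (2 * v))) := by
  have h_pointwise : ∀ x, gaussianPDF m₂ v x * (gaussianPDF m₁ v / gaussianPDF m₂ v) x ^ a
      = ENNReal.ofReal (exp (a * (a - 1) * (m₁ - m₂) ^ 2 / (2 * v)))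
        * gaussianPDF (a * m₁ + (1 - a) * m₂) v x := by
    intro x
    have h₂ := gaussianPDFReal_pos m₂ v x hv
    rw [Pi.div_apply, gaussianPDF, gaussianPDF, gaussianPDF, ← ENNReal.ofReal_div_of_pos h₂,
      ENNReal.ofReal_rpow_of_pos (div_pos (gaussianPDFReal_pos m₁ v x hv) h₂),
      ← ENNReal.ofReal_mul h₂.le, ← ENNReal.ofReal_mul (exp_nonneg _),
      gaussianPDFReal_mul_div_rpow m₁ m₂ a hv]
  rw [gaussianReal_of_var_ne_zero _ hv, lintegral_withDensity_eq_lintegral_mul _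
      (measurable_gaussianPDF _ _)
      (((measurable_gaussianPDF _ _).div (measurable_gaussianPDF _ _)).pow_const a)]
  simp only [Pi.mul_apply, h_pointwise]
  rw [lintegral_const_mul _ (measurable_gaussianPDF _ _), lintegral_gaussianPDF_eq_one _ hv,
    mul_one]

theorem renyiDiv_pi_gaussianReal {ι : Type*} [Fintype ι] (hv : v ≠ 0) {a : ℝ}
    (ha : a ≠ 1) (m₁ m₂ : ι → ℝ) :
    renyiDiv a (Measure.pi fun i ↦ gaussianReal (m₁ i) v)
        (Measure.pi fun i ↦ gaussianReal (m₂ i) v)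
      = (((a * ∑ i, (m₁ i - m₂ i) ^ 2) / (2 * v) : ℝ) : EReal) := by
  set g : ι → ℝ → ℝ≥0∞ := fun i ↦ gaussianPDF (m₁ i) v / gaussianPDF (m₂ i) v
  have hg : ∀ i, Measurable (g i) :=
    fun i ↦ (measurable_gaussianPDF _ _).div (measurable_gaussianPDF _ _)
  have hg_top : ∀ i x, g i x ≠ ∞ :=
    fun i x ↦ ENNReal.div_ne_top ENNReal.ofReal_ne_top (gaussianPDF_pos _ hv x).ne'
  have h_int : ∫⁻ x, (∏ i, g i (x i)) ^ a ∂(Measure.pi fun i ↦ gaussianReal (m₂ i) v)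
      = ENNReal.ofReal (exp (a * (a - 1) * (∑ i, (m₁ i - m₂ i) ^ 2) / (2 * v))) := calc
    _ = ∫⁻ x, ∏ i, g i (x i) ^ a ∂(Measure.pi fun i ↦ gaussianReal (m₂ i) v) := by
      simp_rw [ENNReal.prod_rpow_of_ne_top fun i _ ↦ hg_top i _]
    _ = ∏ i, ENNReal.ofReal (exp (a * (a - 1) * (m₁ i - m₂ i) ^ 2 / (2 * v))) := by
      rw [lintegral_fintype_prod_eq_prod fun i ↦ (hg i).pow_const a]
      exact Finset.prod_congr rfl fun i _ ↦ lintegral_gaussianPDF_div_rpow _ _ a hv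
    _ = _ := by
      rw [← ENNReal.ofReal_prod_of_nonneg fun i _ ↦ (exp_nonneg _), ← exp_sum, ← Finset.sum_div,
        ← Finset.mul_sum]
  rw [Measure.pi_eq_withDensity_prod hg fun i ↦ gaussianReal_eq_withDensity_div _ _ hv]
  have hG : Measurable fun x : ι → ℝ ↦ ∏ i, g i (x i) :=
    Finset.measurable_prod _ fun i _ ↦ (hg i).comp (measurable_pi_apply i)
  rw [renyiDiv_withDensity a hG (h_int ▸ ENNReal.ofReal_ne_top), h_int,
    ENNReal.toReal_ofReal (exp_nonneg _), log_exp]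
  have ha' : a - 1 ≠ 0 := sub_ne_zero.mpr ha
  congr 1
  field_simp

end Gaussian

open ProbabilityTheory in
/-- The Rényi divergence between two isotropic Gaussians `⊗ N((μ₁)_j, σ²)` and
`⊗ N((μ₂)_j, σ²)` equals `α ‖μ₁ - μ₂‖₂² / (2σ²)`; consequently the Gaussian
mechanism `f(·) + N(0, σ² I_d)` applied to a function of ℓ₂-sensitivity `Δ` is
`(α, α Δ²/(2σ²))`-RDP on every pair of neighboring datasets. -/
theorem gaussian_mechanism_rdp {d : ℕ} (α σ : ℝ) (hα : 1 < α) (hσ : 0 < σ)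
    (μ₁ μ₂ : Fin d → ℝ)
    {Dataset : Type*} (Neighbor : Dataset → Dataset → Prop)
    (f : Dataset → Fin d → ℝ) (Δ : ℝ)
    (hΔ : ∀ D D', Neighbor D D' →
      Real.sqrt (∑ j, (f D j - f D' j) ^ 2) ≤ Δ) :
    renyiDiv α (Measure.pi fun j => gaussianReal (μ₁ j) ((σ ^ 2).toNNReal))
        (Measure.pi fun j => gaussianReal (μ₂ j) ((σ ^ 2).toNNReal)) =
      ((α * (∑ j, (μ₁ j - μ₂ j) ^ 2) / (2 * σ ^ 2) : ℝ) : EReal) ∧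
    ∀ D D', Neighbor D D' →
      renyiDiv α (Measure.pi fun j => gaussianReal (f D j) ((σ ^ 2).toNNReal))
          (Measure.pi fun j => gaussianReal (f D' j) ((σ ^ 2).toNNReal)) ≤
        ((α * Δ ^ 2 / (2 * σ ^ 2) : ℝ) : EReal) := by
  have hv : (σ ^ 2).toNNReal ≠ 0 := by simpa using hσ.ne'
  have hv_coe : ((σ ^ 2).toNNReal : ℝ) = σ ^ 2 := Real.coe_toNNReal _ (sq_nonneg σ)
  have h_renyi := fun m₁ m₂ ↦ renyiDiv_pi_gaussianReal (ι := Fin d) hv hα.ne' m₁ m₂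
  simp only [hv_coe] at h_renyi
  refine ⟨h_renyi μ₁ μ₂, fun D D' hDD' ↦ ?_⟩
  have h_sum : ∑ j, (f D j - f D' j) ^ 2 ≤ Δ ^ 2 :=
    (Real.sqrt_le_left ((Real.sqrt_nonneg _).trans (hΔ D D' hDD'))).mp (hΔ D D' hDD')
  rw [h_renyi, EReal.coe_le_coe_iff]
  gcongr
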